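/- arXiv:2312.03473 — 3 statements merged into one kernel-verified Lean document; each statement's English description precedes it below -/
import Mathlib

section
/- Let K, K′ ⊆ ℝ^n be locally anti-blocking convex bodies. For σ ∈ {−1,1}^n write K_σ = K ∩ σℝ_+^n and K′_σ = K′ ∩ σℝ_+^n. Then Vol_n(K + K′) = Σ_{σ ∈ {−1,1}^n} Vol_n(K_σ + K′_σ). -/
open MeasureTheory
open scoped Pointwise

noncomputable section

/-- The nonnegative orthant `ℝ₊ⁿ`. -/
def nonnegOrthant (n : ℕ) : Set (EuclideanSpace ℝ (Fin n)) := {x | ∀ i, 0 ≤ x i}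

/-- The sign `±1` associated to a boolean. -/
def sgn (b : Bool) : ℝ := if b then 1 else -1

/-- The closed orthant `σ ℝ₊ⁿ` corresponding to a sign vector `σ ∈ {-1,1}ⁿ`. -/
def signedOrthant {n : ℕ} (σ : Fin n → Bool) : Set (EuclideanSpace ℝ (Fin n)) :=
  {x | ∀ i, 0 ≤ sgn (σ i) * x i}

/-- Coordinatewise reflection `σ S = {(σ₁x₁, …, σₙxₙ) : x ∈ S}`. -/
def sigmaAct {n : ℕ} (σ : Fin n → Bool) (S : Set (EuclideanSpace ℝ (Fin n))) :
    Set (EuclideanSpace ℝ (Fin n)) :=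
  (fun x => (WithLp.toLp 2 (fun i => sgn (σ i) * x i) : EuclideanSpace ℝ (Fin n))) '' S

/-- Orthogonal projection onto the coordinate subspace `span {eᵢ : i ∈ I}`. -/
def coordProj {n : ℕ} (I : Finset (Fin n)) (x : EuclideanSpace ℝ (Fin n)) :
    EuclideanSpace ℝ (Fin n) :=
  (WithLp.toLp 2 (fun i => if i ∈ I then x i else 0) : EuclideanSpace ℝ (Fin n))

/-- The coordinate subspace `span {eᵢ : i ∈ I}`, as a set. -/
def coordSubspace {n : ℕ} (I : Finset (Fin n)) : Set (EuclideanSpace ℝ (Fin n)) :=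
  {x | ∀ i ∉ I, x i = 0}

/-- A set `K ⊆ ℝ₊ⁿ` is anti-blocking if for every coordinate subspace `E` the orthogonal
projection `P_E K` equals the section `K ∩ E`. -/
def IsAntiBlocking {n : ℕ} (K : Set (EuclideanSpace ℝ (Fin n))) : Prop :=
  K ⊆ nonnegOrthant n ∧ ∀ I : Finset (Fin n), coordProj I '' K = K ∩ coordSubspace I

/-- `K` is locally anti-blocking if `(σK) ∩ ℝ₊ⁿ` is anti-blocking for every sign vector `σ`. -/
def IsLocallyAntiBlocking {n : ℕ} (K : Set (EuclideanSpace ℝ (Fin n))) : Prop :=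
  ∀ σ : Fin n → Bool, IsAntiBlocking (sigmaAct σ K ∩ nonnegOrthant n)

/-- The coordinate simplex `conv{0, e₁, …}` in the Euclidean space with coordinates `ι`. -/
def coordSimplex (ι : Type*) [Fintype ι] [DecidableEq ι] : Set (EuclideanSpace ℝ ι) :=
  convexHull ℝ (insert 0 (Set.range fun i : ι => EuclideanSpace.single i (1 : ℝ)))

/-- Restriction to the coordinates in `I`, realizing the orthogonal projection onto
`span {eᵢ : i ∈ I}` as a map onto a `#I`-dimensional Euclidean space (so that volumes of
images compute lower-dimensional Lebesgue measures of coordinate projections). -/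
def restrictCoords {n : ℕ} (I : Finset (Fin n)) (x : EuclideanSpace ℝ (Fin n)) :
    EuclideanSpace ℝ ↥I :=
  (WithLp.toLp 2 (fun i => x i) : EuclideanSpace ℝ ↥I)

/-!
A point `z = x + y` of `K + K'` lying in the orthant `σ ℝ₊ⁿ` can be rewritten as a sum of points
of `K_σ` and `K'_σ`: in each coordinate where `x` or `y` has the wrong sign, shrink that summand to
`0` and the other one to `zᵢ`. This is allowed because a convex locally anti-blocking body contains,
with `x`, every point obtained by multiplying the coordinates of `x` by factors in `[0, 1]`. Hence
`K_σ + K'_σ = (K + K') ∩ σ ℝ₊ⁿ`, and the closed orthants cover `ℝⁿ` and overlap only in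
coordinate hyperplanes, which are null.
-/

def scaleCoords {n : ℕ} (c : Fin n → ℝ) (x : EuclideanSpace ℝ (Fin n)) :
    EuclideanSpace ℝ (Fin n) :=
  WithLp.toLp 2 (fun i => c i * x i)

@[simp]
lemma scaleCoords_apply {n : ℕ} (c : Fin n → ℝ) (x : EuclideanSpace ℝ (Fin n)) (i : Fin n) :
    scaleCoords c x i = c i * x i :=
  rfl

lemma sgn_mul_self (b : Bool) : sgn b * sgn b = 1 := by
  cases b <;> norm_num [sgn]

lemma scaleCoords_sgn_involutive {n : ℕ} (σ : Fin n → Bool) :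
    Function.Involutive (scaleCoords fun i => sgn (σ i)) := fun x => by
  ext i
  simp [← mul_assoc, sgn_mul_self]

lemma exists_mem_signedOrthant {n : ℕ} (x : EuclideanSpace ℝ (Fin n)) :
    ∃ σ : Fin n → Bool, x ∈ signedOrthant σ := by
  refine ⟨fun i => decide (0 ≤ x i), fun i => ?_⟩
  by_cases h : 0 ≤ x i
  · simp [sgn, h]
  · simp [sgn, h]
    linarith

lemma IsLocallyAntiBlocking.coordProj_mem {n : ℕ} {K : Set (EuclideanSpace ℝ (Fin n))}
    (hK : IsLocallyAntiBlocking K) {x : EuclideanSpace ℝ (Fin n)} (hx : x ∈ K)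
    (I : Finset (Fin n)) : coordProj I x ∈ K := by
  obtain ⟨σ, hσ⟩ := exists_mem_signedOrthant x
  set ρ := scaleCoords fun i => sgn (σ i)
  have hρ : ρ x ∈ sigmaAct σ K ∩ nonnegOrthant n := ⟨⟨x, hx, rfl⟩, hσ⟩
  have hsec : coordProj I (ρ x) ∈ (sigmaAct σ K ∩ nonnegOrthant n) ∩ coordSubspace I :=
    (hK σ).2 I ▸ Set.mem_image_of_mem (coordProj I) hρ
  obtain ⟨u, hu, hu_eq : ρ u = _⟩ := hsec.1.1
  -- `P_E` commutes with the reflection `ρ`, which is an involution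
  have : coordProj I x = u := by
    rw [← scaleCoords_sgn_involutive σ u]
    change _ = ρ (ρ u)
    rw [hu_eq]
    ext i
    by_cases hi : i ∈ I <;> simp [coordProj, hi, ρ, ← mul_assoc, sgn_mul_self]
  exact this ▸ hu

lemma IsLocallyAntiBlocking.scaleCoords_mem {n : ℕ} {K : Set (EuclideanSpace ℝ (Fin n))}
    (hKc : Convex ℝ K) (hK : IsLocallyAntiBlocking K) {x : EuclideanSpace ℝ (Fin n)}
    (hx : x ∈ K) {c : Fin n → ℝ} (hc : ∀ i, c i ∈ Set.Icc (0 : ℝ) 1) :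
    scaleCoords c x ∈ K := by
  classical
  suffices ∀ S : Finset (Fin n), ∀ c : Fin n → ℝ, (∀ i, c i ∈ Set.Icc (0 : ℝ) 1) →
      (∀ i ∉ S, c i = 1) → scaleCoords c x ∈ K from
    this Finset.univ c hc fun i hi => absurd (Finset.mem_univ i) hi
  intro S
  induction S using Finset.induction_on with
  | empty =>
    intro c _ hc1
    convert hx
    ext i
    simp [hc1 i (Finset.notMem_empty i)]
  | insert i S hiS ih =>
    intro c hc hc1
    set w := scaleCoords (Function.update c i 1) x
    have hw : w ∈ K := by
      refine ih _ (fun j => ?_) (fun j hj => ?_)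
      · by_cases hji : j = i
        · subst hji; simp
        · simpa [hji] using hc j
      · by_cases hji : j = i
        · subst hji; simp
        · simpa [hji] using hc1 j (by simp [hji, hj])
    have hcomb : scaleCoords c x = c i • w + (1 - c i) • coordProj (Finset.univ.erase i) w := by
      ext j
      by_cases hji : j = i
      · subst hji; simp [w, coordProj]
      · simp [w, coordProj, hji]
        ring
    rw [hcomb]
    exact hKc hw (hK.coordProj_mem hw _) (hc i).1 (by linarith [(hc i).2]) (by ring)

lemma exists_mul_eq_add_of_mul_neg {s a b : ℝ} (ha : s * a < 0) (hab : 0 ≤ s * (a + b)) :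
    ∃ d ∈ Set.Icc (0 : ℝ) 1, d * b = a + b ∧ 0 ≤ s * (d * b) := by
  have hsb : 0 < s * b := by linarith
  refine ⟨s * (a + b) / (s * b), ⟨by positivity, ?_⟩, ?_, ?_⟩
  · rw [div_le_one hsb]
    linarith
  · obtain ⟨hs, hb⟩ := mul_ne_zero_iff.mp hsb.ne'
    field_simp
  · rw [div_mul_eq_mul_div, mul_div_assoc', le_div_iff₀ hsb]
    nlinarith

lemma exists_shrink_add_eq {s a b : ℝ} (hab : 0 ≤ s * (a + b)) :
    ∃ c ∈ Set.Icc (0 : ℝ) 1, ∃ d ∈ Set.Icc (0 : ℝ) 1,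
      c * a + d * b = a + b ∧ 0 ≤ s * (c * a) ∧ 0 ≤ s * (d * b) := by
  have h01 : (1 : ℝ) ∈ Set.Icc (0 : ℝ) 1 := ⟨zero_le_one, le_rfl⟩
  have h00 : (0 : ℝ) ∈ Set.Icc (0 : ℝ) 1 := ⟨le_rfl, zero_le_one⟩
  by_cases ha : s * a < 0
  · obtain ⟨d, hd, hdb, hsd⟩ := exists_mul_eq_add_of_mul_neg ha hab
    exact ⟨0, h00, d, hd, by simp [hdb], by simp, hsd⟩
  by_cases hb : s * b < 0
  · obtain ⟨c, hc, hca, hsc⟩ := exists_mul_eq_add_of_mul_neg hb (by rwa [add_comm])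
    exact ⟨c, hc, 0, h00, by simp [hca, add_comm], hsc, by simp⟩
  exact ⟨1, h01, 1, h01, by simp, by simpa using not_lt.mp ha, by simpa using not_lt.mp hb⟩

lemma inter_signedOrthant_add_inter_signedOrthant {n : ℕ}
    {K K' : Set (EuclideanSpace ℝ (Fin n))} (hKc : Convex ℝ K) (hK : IsLocallyAntiBlocking K)
    (hK'c : Convex ℝ K') (hK' : IsLocallyAntiBlocking K') (σ : Fin n → Bool) :
    (K ∩ signedOrthant σ) + (K' ∩ signedOrthant σ) = (K + K') ∩ signedOrthant σ := by
  refine subset_antisymm ?_ ?_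
  · rintro _ ⟨x, ⟨hx, hxσ⟩, y, ⟨hy, hyσ⟩, rfl⟩
    refine ⟨Set.add_mem_add hx hy, fun i => ?_⟩
    simpa [mul_add] using add_nonneg (hxσ i) (hyσ i)
  · rintro _ ⟨⟨x, hx, y, hy, rfl⟩, hσ⟩
    choose c hc d hd hsum hcx hdy using fun i => exists_shrink_add_eq (hσ i)
    refine ⟨scaleCoords c x, ⟨hK.scaleCoords_mem hKc hx hc, hcx⟩,
      scaleCoords d y, ⟨hK'.scaleCoords_mem hK'c hy hd, hdy⟩, ?_⟩
    ext i
    exact hsum i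

lemma isClosed_signedOrthant {n : ℕ} (σ : Fin n → Bool) : IsClosed (signedOrthant σ) := by
  simp only [signedOrthant, Set.ofPred_forall]
  exact isClosed_iInter fun i =>
    isClosed_le continuous_const (continuous_const.mul (EuclideanSpace.proj i).continuous)

section AddHaar

variable {n : ℕ} (μ : Measure (EuclideanSpace ℝ (Fin n))) [μ.IsAddHaarMeasure]

lemma addHaar_coordHyperplane (i : Fin n) : μ {x : EuclideanSpace ℝ (Fin n) | x i = 0} = 0 := by
  let p : EuclideanSpace ℝ (Fin n) →ₗ[ℝ] ℝ :=
    (EuclideanSpace.proj i : EuclideanSpace ℝ (Fin n) →L[ℝ] ℝ)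
  refine Measure.addHaar_submodule μ (LinearMap.ker p) fun h => ?_
  have hp : p = 0 := LinearMap.ker_eq_top.mp h
  simpa [p] using LinearMap.congr_fun hp (EuclideanSpace.single i 1)

lemma aedisjoint_signedOrthant {σ τ : Fin n → Bool} (h : σ ≠ τ) :
    AEDisjoint μ (signedOrthant σ) (signedOrthant τ) := by
  obtain ⟨i, hi⟩ := Function.ne_iff.mp h
  refine measure_mono_null (fun x hx => ?_) (addHaar_coordHyperplane μ i)
  have h1 := hx.1 i
  have h2 := hx.2 i
  cases hσ : σ i <;> cases hτ : τ i <;> simp_all [sgn] <;> linarith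

lemma measure_eq_sum_inter_signedOrthant {S : Set (EuclideanSpace ℝ (Fin n))}
    (hS : NullMeasurableSet S μ) :
    μ S = ∑ σ : Fin n → Bool, μ (S ∩ signedOrthant σ) := by
  have hcover : ⋃ σ : Fin n → Bool, S ∩ signedOrthant σ = S := by
    rw [← Set.inter_iUnion, Set.iUnion_eq_univ_iff.mpr exists_mem_signedOrthant, Set.inter_univ]
  have := measure_iUnion₀ (μ := μ) (f := fun σ => S ∩ signedOrthant σ) ?_ ?_
  · rwa [tsum_fintype, hcover] at this
  · exact fun σ τ h => (aedisjoint_signedOrthant μ h).mono Set.inter_subset_right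
      Set.inter_subset_right
  · exact fun σ => hS.inter (isClosed_signedOrthant σ).measurableSet.nullMeasurableSet

end AddHaar

theorem volume_add_locally_antiblocking_general
    (n : ℕ) (K K' : Set (EuclideanSpace ℝ (Fin n)))
    (hKconv : Convex ℝ K)
    (hKlab : IsLocallyAntiBlocking K)
    (hK'conv : Convex ℝ K')
    (hK'lab : IsLocallyAntiBlocking K') :
    volume (K + K') =
      ∑ σ : Fin n → Bool, volume ((K ∩ signedOrthant σ) + (K' ∩ signedOrthant σ)) := by
  simp_rw [inter_signedOrthant_add_inter_signedOrthant hKconv hKlab hK'conv hK'lab]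
  exact measure_eq_sum_inter_signedOrthant volume ((hKconv.add hK'conv).nullMeasurableSet volume)

/-- For locally anti-blocking bodies `K, K' ⊆ ℝⁿ`,
`Vol(K + K') = ∑_{σ ∈ {-1,1}ⁿ} Vol(K_σ + K'_σ)` where `K_σ = K ∩ σℝ₊ⁿ`. -/
theorem volume_add_locally_antiblocking
    (n : ℕ) (K K' : Set (EuclideanSpace ℝ (Fin n)))
    (hKconv : Convex ℝ K) (hKcomp : IsCompact K) (hKne : K.Nonempty)
    (hKlab : IsLocallyAntiBlocking K)
    (hK'conv : Convex ℝ K') (hK'comp : IsCompact K') (hK'ne : K'.Nonempty)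
    (hK'lab : IsLocallyAntiBlocking K') :
    volume (K + K') =
      ∑ σ : Fin n → Bool, volume ((K ∩ signedOrthant σ) + (K' ∩ signedOrthant σ)) :=
  volume_add_locally_antiblocking_general n K K' hKconv hKlab hK'conv hK'lab
end
end

section
/- Let K, T ⊆ ℝ_+^n be anti-blocking convex bodies. Then Vol_n(K + T) ≤ Vol_n(K − T), where K − T = K + (−T) denotes the Minkowski difference body. -/
open MeasureTheory
open scoped Pointwise

noncomputable section

/-!
Reflect `T` in one coordinate at a time. Fix a coordinate `i` and a line parallel to `eᵢ`. The
pairs `(aᵢ, bᵢ)` over the decompositions `a + b` (`a ∈ K`, `b ∈ T`) of points of that line form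
a down-closed subset `D` of the quadrant `ℝ₊²`, because anti-blocking convex bodies are
down-closed in each coordinate. The line meets `K + T` in `{s + u | (s, u) ∈ D} ⊆ [0, X + Y]`,
where `X` and `Y` are the suprema of the two coordinates on `D`, while it meets the sum of `K`
with the reflection of `T` in `{s - u | (s, u) ∈ D} ⊇ [0, X) ∪ (-Y, 0)`. By Fubini no reflection
decreases the volume, and after reflecting in all coordinates `T` has become `-T`.
-/

open Set Function

theorem volume_image_add_le_volume_image_sub {D : Set (ℝ × ℝ)}
    (hD : ∀ p ∈ D, 0 ≤ p ∧ Icc 0 p ⊆ D) (hbdd : BddAbove D) :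
    volume ((fun p => p.1 + p.2) '' D) ≤ volume ((fun p => p.1 - p.2) '' D) := by
  rcases D.eq_empty_or_nonempty with rfl | hne
  · simp
  obtain ⟨hbdd₁, hbdd₂⟩ := bddAbove_prod.1 hbdd
  set X := sSup (Prod.fst '' D)
  set Y := sSup (Prod.snd '' D)
  have hsum : (fun p => p.1 + p.2) '' D ⊆ Icc 0 (X + Y) := by
    rintro _ ⟨p, hp, rfl⟩
    exact ⟨add_nonneg (hD p hp).1.1 (hD p hp).1.2,
      add_le_add (le_csSup hbdd₁ ⟨p, hp, rfl⟩) (le_csSup hbdd₂ ⟨p, hp, rfl⟩)⟩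
  have hpos : Ico 0 X ⊆ (fun p => p.1 - p.2) '' D := by
    rintro t ⟨ht₀, htX⟩
    obtain ⟨_, ⟨p, hp, rfl⟩, htp⟩ := exists_lt_of_lt_csSup (hne.image _) htX
    exact ⟨(t, 0), (hD p hp).2 ⟨⟨ht₀, le_rfl⟩, htp.le, (hD p hp).1.2⟩, sub_zero t⟩
  have hneg : Ioo (-Y) 0 ⊆ (fun p => p.1 - p.2) '' D := by
    rintro t ⟨htY, ht₀⟩
    obtain ⟨_, ⟨p, hp, rfl⟩, htp⟩ := exists_lt_of_lt_csSup (hne.image _) (neg_lt.1 htY)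
    exact ⟨(0, -t), (hD p hp).2 ⟨⟨le_rfl, (neg_pos.2 ht₀).le⟩, (hD p hp).1.1, htp.le⟩, by simp⟩
  calc volume ((fun p => p.1 + p.2) '' D) ≤ volume (Icc 0 (X + Y)) := measure_mono hsum
    _ ≤ volume (Ico 0 X) + volume (Ioo (-Y) 0) := by
      simpa only [Real.volume_Icc, Real.volume_Ico, Real.volume_Ioo, sub_zero, zero_sub, neg_neg]
        using ENNReal.ofReal_add_le
    _ = volume (Ico 0 X ∪ Ioo (-Y) 0) :=
      (measure_union (disjoint_left.2 fun t ht ht' => ht'.2.not_ge ht.1) measurableSet_Ioo).symm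
    _ ≤ volume ((fun p => p.1 - p.2) '' D) := measure_mono (union_subset hpos hneg)

section Coordinates

variable {ι : Type*} [DecidableEq ι]

def IsDownClosedAt (i : ι) (A : Set (ι → ℝ)) : Prop :=
  ∀ x ∈ A, 0 ≤ x i ∧ ∀ t ∈ Icc 0 (x i), update x i t ∈ A

theorem volume_le_of_volume_slice_le [Fintype ι] {S S' : Set (ι → ℝ)} (hS : MeasurableSet S)
    (hS' : MeasurableSet S') (i : ι)
    (h : ∀ x, volume {t | update x i t ∈ S} ≤ volume {t | update x i t ∈ S'}) :
    volume S ≤ volume S' := by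
  have hslice : ∀ {U : Set (ι → ℝ)}, MeasurableSet U →
      (∫⋯∫⁻_{i}, U.indicator 1 ∂fun _ => volume) = fun x => volume {t | update x i t ∈ U} := by
    intro U hU
    ext x
    rw [lmarginal_singleton]
    exact lintegral_indicator_one (hU.preimage (measurable_update x))
  rw [← lintegral_indicator_one hS, ← lintegral_indicator_one hS', volume_pi]
  refine lintegral_le_of_lmarginal_le {i} (measurable_one.indicator hS)
    (measurable_one.indicator hS') ?_
  rw [hslice hS, hslice hS']
  exact h

theorem volume_add_le_volume_add_reflect [Fintype ι] {A B : Set (ι → ℝ)}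
    (hA : IsCompact A) (hB : IsCompact B) {i : ι}
    (hAi : IsDownClosedAt i A) (hBi : IsDownClosedAt i B) :
    volume (A + B) ≤ volume (A + (fun y => update y i (-y i)) '' B) := by
  have hR : Continuous fun y : ι → ℝ => update y i (-y i) :=
    continuous_id.update i (continuous_apply i).neg
  refine volume_le_of_volume_slice_le (hA.add hB).isClosed.measurableSet
    (hA.add (hB.image hR)).isClosed.measurableSet i fun x => ?_
  set D : Set (ℝ × ℝ) := {p | ∃ a ∈ A, ∃ b ∈ B, (∀ j ≠ i, a j + b j = x j) ∧ (a i, b i) = p}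
  have hD : ∀ p ∈ D, 0 ≤ p ∧ Icc 0 p ⊆ D := by
    rintro _ ⟨a, ha, b, hb, hab, rfl⟩
    refine ⟨⟨(hAi a ha).1, (hBi b hb).1⟩, fun q ⟨hq₀, hq⟩ => ?_⟩
    refine ⟨update a i q.1, (hAi a ha).2 _ ⟨hq₀.1, hq.1⟩,
      update b i q.2, (hBi b hb).2 _ ⟨hq₀.2, hq.2⟩, fun j hj => ?_, by simp⟩
    simpa [update_of_ne hj] using hab j hj
  have hbdd : BddAbove D := by
    refine ((hA.prod hB).image (show Continuous fun ab : (ι → ℝ) × (ι → ℝ) => (ab.1 i, ab.2 i)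
      by fun_prop)).isBounded.bddAbove.mono ?_
    rintro _ ⟨a, ha, b, hb, -, rfl⟩
    exact ⟨(a, b), ⟨ha, hb⟩, rfl⟩
  have hsum : {t | update x i t ∈ A + B} ⊆ (fun p => p.1 + p.2) '' D := by
    rintro t ⟨a, ha, b, hb, hab⟩
    refine ⟨(a i, b i), ⟨a, ha, b, hb, fun j hj => ?_, rfl⟩, ?_⟩
    · simpa [update_of_ne hj] using congrFun hab j
    · simpa using congrFun hab i
  have hdiff : (fun p => p.1 - p.2) '' D ⊆
      {t | update x i t ∈ A + (fun y => update y i (-y i)) '' B} := by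
    rintro _ ⟨_, ⟨a, ha, b, hb, hab, rfl⟩, rfl⟩
    refine ⟨a, ha, _, mem_image_of_mem _ hb, funext fun j => ?_⟩
    rcases eq_or_ne j i with rfl | hj
    · simp [sub_eq_add_neg]
    · simpa [update_of_ne hj] using hab j hj
  exact (measure_mono hsum).trans
    ((volume_image_add_le_volume_image_sub hD hbdd).trans (measure_mono hdiff))

def reflectCoords (s : Finset ι) : (ι → ℝ) → ι → ℝ := fun x j => if j ∈ s then -x j else x j

theorem reflectCoords_empty : reflectCoords (∅ : Finset ι) = id := by
  ext
  simp [reflectCoords]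

theorem reflectCoords_univ [Fintype ι] : reflectCoords (Finset.univ : Finset ι) = Neg.neg := by
  ext
  simp [reflectCoords]

theorem continuous_reflectCoords (s : Finset ι) : Continuous (reflectCoords s) :=
  continuous_pi fun j => by
    by_cases hj : j ∈ s <;> simp only [reflectCoords, hj, if_true, if_false] <;> fun_prop

theorem reflectCoords_insert {s : Finset ι} {i : ι} (hi : i ∉ s) (x : ι → ℝ) :
    reflectCoords (insert i s) x = update (reflectCoords s x) i (-reflectCoords s x i) := by
  ext j
  rcases eq_or_ne j i with rfl | hj <;> simp [reflectCoords, *]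

theorem IsDownClosedAt.image_reflectCoords {i : ι} {T : Set (ι → ℝ)} (hT : IsDownClosedAt i T)
    {s : Finset ι} (hi : i ∉ s) : IsDownClosedAt i (reflectCoords s '' T) := by
  rintro _ ⟨x, hx, rfl⟩
  have hxi : reflectCoords s x i = x i := if_neg hi
  refine ⟨hxi ▸ (hT x hx).1, fun t ht => ⟨update x i t, (hT x hx).2 t (hxi ▸ ht), ?_⟩⟩
  ext j
  rcases eq_or_ne j i with rfl | hj <;> simp [reflectCoords, *]

theorem volume_add_le_volume_add_neg [Fintype ι] {A T : Set (ι → ℝ)}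
    (hA : IsCompact A) (hT : IsCompact T)
    (hAd : ∀ i, IsDownClosedAt i A) (hTd : ∀ i, IsDownClosedAt i T) :
    volume (A + T) ≤ volume (A + -T) := by
  suffices h : ∀ s : Finset ι, volume (A + T) ≤ volume (A + reflectCoords s '' T) by
    simpa only [reflectCoords_univ, image_neg_eq_neg] using h Finset.univ
  intro s
  induction s using Finset.induction_on with
  | empty => simp [reflectCoords_empty]
  | insert i s hi ih =>
    refine ih.trans ((volume_add_le_volume_add_reflect hA
      (hT.image (continuous_reflectCoords s)) (hAd i) ((hTd i).image_reflectCoords hi)).trans_eq ?_)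
    simp only [image_image, ← reflectCoords_insert hi]

end Coordinates

theorem volume_preimage_toLp_add {ι : Type*} [Fintype ι] {S S' : Set (EuclideanSpace ℝ ι)}
    (h : MeasurableSet (S + S')) :
    volume (WithLp.toLp 2 ⁻¹' S + WithLp.toLp 2 ⁻¹' S') = volume (S + S') := by
  have hadd : WithLp.toLp 2 ⁻¹' (S + S') = WithLp.toLp 2 ⁻¹' S + WithLp.toLp 2 ⁻¹' S' :=
    Set.preimage_add (WithLp.linearEquiv 2 ℝ (ι → ℝ)).symm (LinearEquiv.injective _)
      (by simp) (by simp)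
  rw [← hadd]
  exact (PiLp.volume_preserving_toLp ι).measure_preimage h.nullMeasurableSet

theorem IsCompact.preimage_toLp {ι : Type*} [Fintype ι] {S : Set (EuclideanSpace ℝ ι)}
    (hS : IsCompact S) : IsCompact (WithLp.toLp 2 ⁻¹' S) :=
  (PiLp.continuousLinearEquiv 2 ℝ fun _ : ι => ℝ).symm.toHomeomorph.isCompact_preimage.2 hS

theorem IsAntiBlocking.isDownClosedAt {n : ℕ} {K : Set (EuclideanSpace ℝ (Fin n))}
    (hK : IsAntiBlocking K) (hconv : Convex ℝ K) (i : Fin n) :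
    IsDownClosedAt i (WithLp.toLp 2 ⁻¹' K) := by
  intro x hx
  have hxi : 0 ≤ x i := hK.1 hx i
  refine ⟨hxi, fun t ⟨ht₀, ht⟩ => ?_⟩
  -- `update x i t` lies on the segment from `x₀`, the projection of `x` to `{xᵢ = 0}`, to `x`
  set x₀ := coordProj (Finset.univ.erase i) (WithLp.toLp 2 x)
  have hx₀ : x₀ ∈ K := ((hK.2 _).subset (mem_image_of_mem _ hx)).1
  have hseg : WithLp.toLp 2 (update x i t) = x₀ + (t / x i) • (WithLp.toLp 2 x - x₀) := by
    ext j
    rcases eq_or_ne j i with rfl | hj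
    · simp [x₀, coordProj, div_mul_cancel_of_imp fun h : x j = 0 => le_antisymm (h ▸ ht) ht₀]
    · simp [x₀, coordProj, hj]
  show WithLp.toLp 2 (update x i t) ∈ K
  rw [hseg]
  exact hconv.add_smul_sub_mem hx₀ hx ⟨div_nonneg ht₀ hxi, div_le_one_of_le₀ ht hxi⟩

theorem volume_add_le_volume_sub_antiblocking_general
    (n : ℕ) (K T : Set (EuclideanSpace ℝ (Fin n)))
    (hKconv : Convex ℝ K) (hKcomp : IsCompact K)
    (hKab : IsAntiBlocking K)
    (hTconv : Convex ℝ T) (hTcomp : IsCompact T)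
    (hTab : IsAntiBlocking T) :
    volume (K + T) ≤ volume (K + -T) := by
  rw [← volume_preimage_toLp_add (hKcomp.add hTcomp).isClosed.measurableSet,
    ← volume_preimage_toLp_add (hKcomp.add hTcomp.neg).isClosed.measurableSet]
  exact volume_add_le_volume_add_neg hKcomp.preimage_toLp hTcomp.preimage_toLp
    (hKab.isDownClosedAt hKconv) (hTab.isDownClosedAt hTconv)

/-- For anti-blocking bodies `K, T ⊆ ℝ₊ⁿ`, `Vol(K + T) ≤ Vol(K - T)`. -/
theorem volume_add_le_volume_sub_antiblocking
    (n : ℕ) (K T : Set (EuclideanSpace ℝ (Fin n)))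
    (hKconv : Convex ℝ K) (hKcomp : IsCompact K) (hKne : K.Nonempty)
    (hKab : IsAntiBlocking K)
    (hTconv : Convex ℝ T) (hTcomp : IsCompact T) (hTne : T.Nonempty)
    (hTab : IsAntiBlocking T) :
    volume (K + T) ≤ volume (K + -T) :=
  volume_add_le_volume_sub_antiblocking_general n K T hKconv hKcomp hKab hTconv hTcomp hTab
end
end

section
/- Let 0 ≤ k ≤ n, let E = span{e_{n−k+1}, …, e_n} ⊆ ℝ^n, and let K ⊆ E be a convex body. Then Vol_n(Δ_n + K) = ∫_{(t_1,…,t_{n−k}) ∈ Δ_{n−k}} Vol_k( (1 − Σ_{i=1}^{n−k} t_i) Δ_E + K ) dt, where Δ_{n−k} is the coordinate simplex conv{0, e_1, …, e_{n−k}} in span{e_1,…,e_{n−k}}, Δ_E = conv{0, e_{n−k+1}, …, e_n} is the coordinate simplex in E, and Vol_k is k-dimensional Lebesgue measure on E. -/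
open MeasureTheory
open scoped Pointwise

noncomputable section

/-! Split a point of `ℝⁿ` as `(u, v)`, with `u` its coordinates outside `I` and `v` those in `I`.
The points of `Δₙ` with first block `u` are those with `u ∈ Δ_{Iᶜ}` and second block in
`(1 - ∑ uᵢ) Δ_I`; as `K` lies in the coordinate subspace of `I`, adding `K` only moves the second
block, so the slice of `Δₙ + K` over `u` is `(1 - ∑ uᵢ) Δ_I + K` for `u ∈ Δ_{Iᶜ}` and empty
otherwise. The formula is then Tonelli for the volume-preserving splitting
`ℝⁿ ≃ ℝ^{Iᶜ} × ℝ^I`, and the slices are compact, so the lower integral is a Bochner integral. -/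

open Set Finset

section EuclideanCoordinates

variable {ι : Type*} [Fintype ι] [DecidableEq ι]

theorem coordSimplex_eq : coordSimplex ι = {x | (∀ i, 0 ≤ x i) ∧ ∑ i, x i ≤ 1} := by
  apply Set.Subset.antisymm
  · refine convexHull_min ?_ ?_
    · rintro _ (rfl | ⟨j, rfl⟩)
      · simp
      · simp [apply_ite]
    · intro x ⟨hx0, hx1⟩ y ⟨hy0, hy1⟩ a b ha hb hab
      refine ⟨fun i => add_nonneg (mul_nonneg ha (hx0 i)) (mul_nonneg hb (hy0 i)), ?_⟩
      simp only [PiLp.add_apply, PiLp.smul_apply, smul_eq_mul, sum_add_distrib, ← mul_sum]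
      nlinarith
  · rintro x ⟨hx0, hx1⟩
    -- `x` is the convex combination of `0` and the `eᵢ` with weights `1 - ∑ xᵢ` and `xᵢ`
    let w : Option ι → ℝ := fun o => o.elim (1 - ∑ i, x i) x
    let z : Option ι → EuclideanSpace ℝ ι := fun o => o.elim 0 (EuclideanSpace.single · 1)
    have hx : ∑ o, w o • z o = x := by
      simpa [w, z, Fintype.sum_option] using (EuclideanSpace.basisFun ι ℝ).sum_repr x
    rw [← hx]
    refine (convex_convexHull ℝ _).sum_mem (fun o _ => ?_) (by simp [w, Fintype.sum_option])
      (fun o _ => subset_convexHull ℝ _ ?_)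
    · cases o <;> simp [w, hx1, hx0]
    · cases o <;> simp [z]

theorem isCompact_coordSimplex : IsCompact (coordSimplex ι) :=
  ((Set.finite_range _).insert 0).isCompact_convexHull ℝ

theorem zero_mem_coordSimplex : (0 : EuclideanSpace ℝ ι) ∈ coordSimplex ι :=
  subset_convexHull ℝ _ (mem_insert _ _)

theorem mem_smul_coordSimplex_iff {c : ℝ} (hc : 0 ≤ c) {x : EuclideanSpace ℝ ι} :
    x ∈ c • coordSimplex ι ↔ (∀ i, 0 ≤ x i) ∧ ∑ i, x i ≤ c := by
  obtain rfl | hc := hc.eq_or_lt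
  · rw [zero_smul_set ⟨0, zero_mem_coordSimplex⟩, Set.mem_zero]
    constructor
    · rintro rfl
      simp
    · rintro ⟨hx0, hx1⟩
      ext i
      exact (sum_eq_zero_iff_of_nonneg fun i _ => hx0 i).1
        (hx1.antisymm (sum_nonneg fun i _ => hx0 i)) i (mem_univ i)
  · rw [mem_smul_set_iff_inv_smul_mem₀ hc.ne', coordSimplex_eq]
    simp only [mem_ofPred_eq, PiLp.smul_apply, smul_eq_mul, ← mul_sum, inv_mul_le_iff₀ hc, mul_one,
      mul_nonneg_iff_of_pos_left (inv_pos.2 hc)]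

variable (I : Finset ι)

def glueCoords : EuclideanSpace ℝ ↥Iᶜ × EuclideanSpace ℝ ↥I →ₗ[ℝ] EuclideanSpace ℝ ι where
  toFun p := WithLp.toLp 2 fun i =>
    if h : i ∈ I then p.2 ⟨i, h⟩ else p.1 ⟨i, Finset.mem_compl.2 h⟩
  map_add' p q := by ext i; by_cases h : i ∈ I <;> simp [h]
  map_smul' c p := by ext i; by_cases h : i ∈ I <;> simp [h]

variable {I}

theorem glueCoords_apply_of_mem (p : EuclideanSpace ℝ ↥Iᶜ × EuclideanSpace ℝ ↥I) {i : ι}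
    (h : i ∈ I) : glueCoords I p i = p.2 ⟨i, h⟩ := by
  simp [glueCoords, h]

theorem glueCoords_apply_of_notMem (p : EuclideanSpace ℝ ↥Iᶜ × EuclideanSpace ℝ ↥I) {i : ι}
    (h : i ∉ I) : glueCoords I p i = p.1 ⟨i, Finset.mem_compl.2 h⟩ := by
  simp [glueCoords, h]

theorem sum_glueCoords (p : EuclideanSpace ℝ ↥Iᶜ × EuclideanSpace ℝ ↥I) :
    ∑ i, glueCoords I p i = ∑ i, p.1 i + ∑ i, p.2 i := by
  rw [← Finset.sum_add_sum_compl I, add_comm, ← Finset.sum_coe_sort I, ← Finset.sum_coe_sort Iᶜ]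
  simp [glueCoords_apply_of_mem, glueCoords_apply_of_notMem, Finset.mem_compl.1 (Subtype.prop _)]

theorem glueCoords_nonneg_iff (p : EuclideanSpace ℝ ↥Iᶜ × EuclideanSpace ℝ ↥I) :
    (∀ i, 0 ≤ glueCoords I p i) ↔ (∀ i, 0 ≤ p.1 i) ∧ ∀ i, 0 ≤ p.2 i := by
  refine ⟨fun h => ⟨fun i => ?_, fun i => ?_⟩, fun ⟨h₁, h₂⟩ i => ?_⟩
  · simpa [glueCoords_apply_of_notMem p (Finset.mem_compl.1 i.2)] using h i
  · simpa [glueCoords_apply_of_mem p i.2] using h i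
  by_cases hi : i ∈ I
  · simpa [glueCoords_apply_of_mem p hi] using h₂ ⟨i, hi⟩
  · simpa [glueCoords_apply_of_notMem p hi] using h₁ ⟨i, Finset.mem_compl.2 hi⟩

theorem measurePreserving_glueCoords : MeasurePreserving (glueCoords I) := by
  let e : ↥Iᶜ ⊕ ↥I ≃ ι := ((Equiv.sumComm _ _).trans (Equiv.sumCongr (Equiv.refl ↥I)
    (Equiv.subtypeEquivRight fun _ => Finset.mem_compl))).trans (Equiv.sumCompl (· ∈ I))
  have h := (PiLp.volume_preserving_toLp ι).comp
    ((volume_measurePreserving_piCongrLeft (fun _ => ℝ) e).comp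
      ((volume_measurePreserving_sumPiEquivProdPi (fun _ => ℝ)).symm.comp
        ((PiLp.volume_preserving_ofLp ↥Iᶜ).prod (PiLp.volume_preserving_ofLp ↥I))))
  convert h using 1
  · ext p i
    obtain ⟨a, rfl⟩ := e.surjective i
    simp only [Function.comp_apply, PiLp.toLp_apply, MeasurableEquiv.coe_piCongrLeft,
      Equiv.piCongrLeft_apply_apply]
    rcases a with a | a
    · exact glueCoords_apply_of_notMem p (Finset.mem_compl.1 a.2)
    · exact glueCoords_apply_of_mem p a.2
  · exact Measure.volume_eq_prod _ _

theorem glueCoords_mem_coordSimplex_iff (u : EuclideanSpace ℝ ↥Iᶜ) (v : EuclideanSpace ℝ ↥I) :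
    glueCoords I (u, v) ∈ coordSimplex ι ↔
      u ∈ coordSimplex ↥Iᶜ ∧ v ∈ (1 - ∑ i, u i) • coordSimplex ↥I := by
  rw [coordSimplex_eq (ι := ι), coordSimplex_eq (ι := ↥Iᶜ)]
  simp only [Set.mem_ofPred_eq, glueCoords_nonneg_iff, sum_glueCoords]
  constructor
  · rintro ⟨⟨hu, hv⟩, hsum⟩
    have hv_sum := Finset.sum_nonneg fun i (_ : i ∈ Finset.univ) => hv i
    exact ⟨⟨hu, by linarith⟩, (mem_smul_coordSimplex_iff (by linarith)).2 ⟨hv, by linarith⟩⟩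
  · rintro ⟨⟨hu, hsum⟩, hv⟩
    obtain ⟨hv, hvsum⟩ := (mem_smul_coordSimplex_iff (by linarith)).1 hv
    exact ⟨⟨hu, hv⟩, by linarith⟩

theorem volume_eq_lintegral_volume_slice (I : Finset ι) {A : Set (EuclideanSpace ℝ ι)}
    (hA : MeasurableSet A) : volume A = ∫⁻ u, volume {v | glueCoords I (u, v) ∈ A} := by
  rw [← measurePreserving_glueCoords.measure_preimage hA.nullMeasurableSet,
    Measure.volume_eq_prod, Measure.prod_apply (ν := (volume : Measure (EuclideanSpace ℝ ↥I)))
      (measurePreserving_glueCoords.measurable hA)]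
  rfl

theorem measurable_volume_slice (I : Finset ι) {A : Set (EuclideanSpace ℝ ι)}
    (hA : MeasurableSet A) : Measurable fun u => volume {v | glueCoords I (u, v) ∈ A} :=
  measurable_measure_prodMk_left (ν := (volume : Measure (EuclideanSpace ℝ ↥I)))
    (measurePreserving_glueCoords.measurable hA)

end EuclideanCoordinates

section RestrictCoords

variable {n : ℕ} {I : Finset (Fin n)}

variable (I) in
def restrictCoordsₗ : EuclideanSpace ℝ (Fin n) →ₗ[ℝ] EuclideanSpace ℝ ↥I where
  toFun := restrictCoords I
  map_add' _ _ := rfl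
  map_smul' _ _ := rfl

theorem coe_restrictCoordsₗ : ⇑(restrictCoordsₗ I) = restrictCoords I := rfl

theorem glueCoords_zero_restrictCoords {x : EuclideanSpace ℝ (Fin n)} (hx : x ∈ coordSubspace I) :
    glueCoords I (0, restrictCoords I x) = x := by
  ext i
  by_cases hi : i ∈ I
  · simp [glueCoords_apply_of_mem _ hi, restrictCoords]
  · simp [glueCoords_apply_of_notMem _ hi, hx i hi]

theorem restrictCoords_single {i : Fin n} (hi : i ∈ I) (a : ℝ) :
    restrictCoords I (EuclideanSpace.single i a) = EuclideanSpace.single ⟨i, hi⟩ a := by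
  ext j
  simp [restrictCoords, PiLp.single_apply, Subtype.ext_iff]

theorem restrictCoords_image_convexHull :
    restrictCoords I '' convexHull ℝ (insert 0 ((fun i => EuclideanSpace.single i (1 : ℝ)) '' ↑I))
      = coordSimplex ↥I := by
  rw [← coe_restrictCoordsₗ, LinearMap.image_convexHull, Set.image_insert_eq, map_zero,
    Set.image_image, coordSimplex]
  congr 1
  ext x
  simp only [Set.mem_insert_iff, Set.mem_image, Set.mem_range, Finset.mem_coe]
  refine or_congr_right ⟨?_, ?_⟩
  · rintro ⟨i, hi, rfl⟩
    exact ⟨⟨i, hi⟩, (restrictCoords_single hi 1).symm⟩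
  · rintro ⟨j, rfl⟩
    exact ⟨j, j.2, restrictCoords_single j.2 1⟩

theorem restrictCoords_image_smul_convexHull_add (c : ℝ) (K : Set (EuclideanSpace ℝ (Fin n))) :
    restrictCoords I '' (c • convexHull ℝ
        (insert 0 ((fun i => EuclideanSpace.single i (1 : ℝ)) '' ↑I)) + K)
      = c • coordSimplex ↥I + restrictCoords I '' K := by
  rw [← coe_restrictCoordsₗ, Set.image_add, image_smul_set, coe_restrictCoordsₗ,
    restrictCoords_image_convexHull]

theorem glueCoords_mem_coordSimplex_add_iff {K : Set (EuclideanSpace ℝ (Fin n))}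
    (hK : K ⊆ coordSubspace I) (u : EuclideanSpace ℝ ↥Iᶜ) (v : EuclideanSpace ℝ ↥I) :
    glueCoords I (u, v) ∈ coordSimplex (Fin n) + K ↔ u ∈ coordSimplex ↥Iᶜ ∧
      v ∈ restrictCoords I '' ((1 - ∑ i, u i) •
        convexHull ℝ (insert 0 ((fun i => EuclideanSpace.single i (1 : ℝ)) '' ↑I)) + K) := by
  rw [restrictCoords_image_smul_convexHull_add]
  constructor
  · intro h
    obtain ⟨a, ha, y, hy, hay⟩ := Set.mem_add.1 h
    have : a = glueCoords I (u, v - restrictCoords I y) := calc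
      a = glueCoords I (u, v) - glueCoords I (0, restrictCoords I y) := by
        rw [glueCoords_zero_restrictCoords (hK hy), ← hay, add_sub_cancel_right]
      _ = glueCoords I (u, v - restrictCoords I y) := by rw [← map_sub, Prod.mk_sub_mk, sub_zero]
    rw [this, glueCoords_mem_coordSimplex_iff] at ha
    exact ⟨ha.1, _, ha.2, _, Set.mem_image_of_mem _ hy, sub_add_cancel _ _⟩
  · rintro ⟨hu, w, hw, _, ⟨y, hy, rfl⟩, rfl⟩
    refine ⟨glueCoords I (u, w), (glueCoords_mem_coordSimplex_iff _ _).2 ⟨hu, hw⟩, y, hy, ?_⟩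
    calc glueCoords I (u, w) + y = glueCoords I (u, w) + glueCoords I (0, restrictCoords I y) := by
          rw [glueCoords_zero_restrictCoords (hK hy)]
      _ = glueCoords I (u, w + restrictCoords I y) := by rw [← map_add, Prod.mk_add_mk, add_zero]

end RestrictCoords

theorem volume_simplex_add_lower_dim_general
    (n : ℕ)
    (I : Finset (Fin n))
    (K : Set (EuclideanSpace ℝ (Fin n)))
    (hKcomp : IsCompact K)
    (hKE : K ⊆ coordSubspace I) :
    (volume (coordSimplex (Fin n) + K)).toReal =
      ∫ t in coordSimplex ↥(Iᶜ),
        (volume (restrictCoords I ''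
          ((1 - ∑ i, t i) • convexHull ℝ
              (insert 0 ((fun i : Fin n => EuclideanSpace.single i (1 : ℝ)) '' ↑I))
            + K))).toReal := by
  have hA : MeasurableSet (coordSimplex (Fin n) + K) :=
    (isCompact_coordSimplex.add hKcomp).measurableSet
  have hΔ : MeasurableSet (coordSimplex ↥Iᶜ) := isCompact_coordSimplex.measurableSet
  have hslice (u) (hu : u ∈ coordSimplex ↥Iᶜ) :
      {v | glueCoords I (u, v) ∈ coordSimplex (Fin n) + K} = restrictCoords I ''
        ((1 - ∑ i, u i) • convexHull ℝ
          (insert 0 ((fun i : Fin n => EuclideanSpace.single i (1 : ℝ)) '' ↑I)) + K) := by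
    ext v
    simp [glueCoords_mem_coordSimplex_add_iff hKE, hu]
  have hsupp : (fun u => volume {v | glueCoords I (u, v) ∈ coordSimplex (Fin n) + K}).support
      ⊆ coordSimplex ↥Iᶜ := by
    intro u hu
    by_contra h
    simp [glueCoords_mem_coordSimplex_add_iff hKE, h] at hu
  have hfinite (u) (hu : u ∈ coordSimplex ↥Iᶜ) :
      volume {v | glueCoords I (u, v) ∈ coordSimplex (Fin n) + K} < ⊤ := by
    rw [hslice u hu, restrictCoords_image_smul_convexHull_add]
    exact ((isCompact_coordSimplex.smul _).add
      (hKcomp.image (restrictCoordsₗ I).continuous_of_finiteDimensional)).measure_lt_top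
  rw [volume_eq_lintegral_volume_slice I hA, ← setLIntegral_eq_of_support_subset hsupp,
    ← integral_toReal (measurable_volume_slice I hA).aemeasurable
      (ae_restrict_of_forall_mem hΔ hfinite)]
  exact setIntegral_congr_fun hΔ fun u hu => by rw [hslice u hu]

/-- **Fubini for a simplex plus a lower-dimensional body (Fact 4.1).**
Let `E = span{e_{n-k+1}, …, e_n}` and `K ⊆ E` a convex body. Then
`Vol_n(Δₙ + K) = ∫_{t ∈ Δ_{n-k}} Vol_k((1 - ∑ tᵢ)Δ_E + K) dt`,
where `Δ_E = conv{0, e_{n-k+1}, …, e_n}` and `Vol_k` is Lebesgue measure on `E`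
(computed via restriction of coordinates to `I`). -/
theorem volume_simplex_add_lower_dim
    (n k : ℕ) (hk : k ≤ n)
    (I : Finset (Fin n)) (hI : I = Finset.univ.filter (fun i : Fin n => n - k ≤ (i : ℕ)))
    (K : Set (EuclideanSpace ℝ (Fin n)))
    (hKconv : Convex ℝ K) (hKcomp : IsCompact K) (hKne : K.Nonempty)
    (hKE : K ⊆ coordSubspace I) :
    (volume (coordSimplex (Fin n) + K)).toReal =
      ∫ t in coordSimplex ↥(Iᶜ),
        (volume (restrictCoords I ''
          ((1 - ∑ i, t i) • convexHull ℝ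
              (insert 0 ((fun i : Fin n => EuclideanSpace.single i (1 : ℝ)) '' ↑I))
            + K))).toReal :=
  volume_simplex_add_lower_dim_general n I K hKcomp hKE
end
end
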